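/- Let d ≥ 1, r > 0, ε > 0, let m > 0 be an integer, and let α ∈ (0, 1/2). Then there exist constants C > 0 and K > 0 such that for every k ∈ ℝ^d with |k| ≥ K, sup_{ξ ∈ B_r} |ℱv_{k,m,ε}(ξ)| ≤ C exp(−α|k|²). -/

import Mathlib

open MeasureTheory Real

noncomputable section

/-- Euclidean space ℝ^d. -/
abbrev Ed (d : ℕ) := EuclideanSpace ℝ (Fin d)

/-- The Fourier transform  ℱv(ξ) = (2π)^{-d} ∫ e^{i ξ·x} v(x) dx. -/
def FT {d : ℕ} (v : Ed d → ℂ) (ξ : Ed d) : ℂ :=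
  ((((2 * π) ^ d)⁻¹ : ℝ) : ℂ) * ∫ x : Ed d, Complex.exp (Complex.I * ((inner ℝ ξ x : ℝ) : ℂ)) * v x

/-- The inverse Fourier transform  ℱ⁻¹u(x) = ∫ u(ξ) e^{-i ξ·x} dξ. -/
def IFT {d : ℕ} (u : Ed d → ℂ) (x : Ed d) : ℂ :=
  ∫ ξ : Ed d, u ξ * Complex.exp (-(Complex.I * ((inner ℝ ξ x : ℝ) : ℂ)))

/-- Q_v(λ) = (2π)^{-d} ∫ e^{λ|x|} |v(x)| dx. -/
def Qv {d : ℕ} (v : Ed d → ℂ) (lam : ℝ) : ℝ :=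
  ((2 * π) ^ d)⁻¹ * ∫ x : Ed d, Real.exp (lam * ‖x‖) * ‖v x‖

/-- The open ball B_r ⊆ ℝ^d. -/
def ball (d : ℕ) (r : ℝ) : Set (Ed d) := {ξ : Ed d | ‖ξ‖ < r}

/-- The sup (L^∞) norm of f on the set S. -/
def supNormOn {d : ℕ} (S : Set (Ed d)) (f : Ed d → ℂ) : ℝ := ⨆ ξ ∈ S, ‖f ξ‖

/-- Membership in L^∞(B_r): measurable and bounded on B_r. -/
def MemLinf {d : ℕ} (r : ℝ) (w : Ed d → ℂ) : Prop :=
  Measurable w ∧ ∃ M : ℝ, ∀ ξ ∈ ball d r, ‖w ξ‖ ≤ M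

/-- Chebyshev polynomial of the first kind, evaluated at a real point. -/
def cheb (k : ℕ) (t : ℝ) : ℝ := (Polynomial.Chebyshev.T ℝ k).eval t

/-- Chebyshev coefficients a_k[w](θ) of the data w on B_r in direction θ. -/
def chebCoef {d : ℕ} (r : ℝ) (w : Ed d → ℂ) (k : ℕ) (θ : Ed d) : ℂ :=
  if k = 0 then
    ((π⁻¹ : ℝ) : ℂ) * ∫ t in (-r)..r, w (t • θ) / ((Real.sqrt (r ^ 2 - t ^ 2) : ℝ) : ℂ)
  else
    (((2 / π : ℝ)) : ℂ) *
      ∫ t in (-r)..r, w (t • θ) * ((cheb k (t / r) : ℝ) : ℂ) / ((Real.sqrt (r ^ 2 - t ^ 2) : ℝ) : ℂ)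

/-- The Chebyshev-based extrapolation C_{R,n} w. -/
def ChebExt {d : ℕ} (r R : ℝ) (n : ℕ) (w : Ed d → ℂ) (ξ : Ed d) : ℂ :=
  if ‖ξ‖ < r then w ξ
  else if ‖ξ‖ < R then
    ∑ k ∈ Finset.range n, chebCoef r w k (‖ξ‖⁻¹ • ξ) * ((cheb k (‖ξ‖ / r) : ℝ) : ℂ)
  else 0

/-- L_τ(δ) = max {1, ½((1-τ) ln(N/δ)/(σ r^ν))^τ }. -/
def Lt (N δ r σ ν τ : ℝ) : ℝ :=
  max 1 (((1 - τ) * Real.log (N / δ) / (σ * r ^ ν)) ^ τ / 2)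

/-- R_τ(δ) = r L_τ(δ). -/
def Rt (N δ r σ ν τ : ℝ) : ℝ := r * Lt N δ r σ ν τ

/-- n_τ(δ). -/
def nt (N δ r σ ν τ : ℝ) : ℕ :=
  if 0 < τ then
    ⌈(2 - τ) * Real.log (N / δ) / (Real.log 2 + (τ * ν)⁻¹ * Real.log (2 * Lt N δ r σ ν τ))⌉₊
  else 0

/-- The extrapolation C*_{τ,δ} = C_{R_τ(δ), n_τ(δ)}. -/
def Cstar {d : ℕ} (N δ r σ ν τ : ℝ) (w : Ed d → ℂ) : Ed d → ℂ :=
  ChebExt r (Rt N δ r σ ν τ) (nt N δ r σ ν τ) w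

/-- c(d) = d π^{d/2} / Γ(d/2 + 1), the surface measure of the unit sphere. -/
def cd (d : ℕ) : ℝ := d * π ^ ((d : ℝ) / 2) / Real.Gamma ((d : ℝ) / 2 + 1)

/-- The W^m norm: ‖(1+|ξ|²)^{m/2} ℱu‖_{L^∞}. -/
def Wnorm {d : ℕ} (m : ℝ) (v : Ed d → ℂ) : ℝ :=
  ⨆ ξ : Ed d, (1 + ‖ξ‖ ^ 2) ^ (m / 2) * ‖FT v ξ‖

/-- The L² norm of f on ℝ^d. -/
def L2Norm {d : ℕ} (f : Ed d → ℂ) : ℝ := Real.sqrt (∫ x : Ed d, ‖f x‖ ^ 2)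

/-- The Sobolev H^s norm: ‖ℱ⁻¹[(1+|ξ|²)^{s/2} ℱu]‖_{L²}. -/
def Hnorm {d : ℕ} (s : ℝ) (v : Ed d → ℂ) : ℝ :=
  L2Norm (IFT fun ξ => (((1 + ‖ξ‖ ^ 2) ^ (s / 2) : ℝ) : ℂ) * FT v ξ)

/-- The open ellipse D(ρ) = { cos z : |Im z| < ln ρ } ⊆ ℂ. -/
def ellipse (ρ : ℝ) : Set ℂ := {w : ℂ | ∃ z : ℂ, |z.im| < Real.log ρ ∧ Complex.cos z = w}

/-- Chebyshev coefficients b_k of a function on [-1,1]. -/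
def chebCoef1 (f : ℂ → ℂ) (k : ℕ) : ℂ :=
  if k = 0 then
    ((π⁻¹ : ℝ) : ℂ) * ∫ t in (-1 : ℝ)..1, f t / ((Real.sqrt (1 - t ^ 2) : ℝ) : ℂ)
  else
    (((2 / π : ℝ)) : ℂ) *
      ∫ t in (-1 : ℝ)..1, f t * ((cheb k t : ℝ) : ℂ) / ((Real.sqrt (1 - t ^ 2) : ℝ) : ℂ)

/-- The instability example v_{k,m,ε}(x) = ε |k|^{-m} e^{-|x|²/2} cos(k·x). -/
def vkme {d : ℕ} (k : Ed d) (m : ℕ) (ε : ℝ) (x : Ed d) : ℂ :=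
  ((ε * (‖k‖ ^ m)⁻¹ * Real.exp (-(‖x‖ ^ 2) / 2) * Real.cos (inner ℝ k x : ℝ) : ℝ) : ℂ)

/-! The Fourier transform of `v_{k,m,ε}` is explicit: `cos (k·x)` splits the Gaussian into two
copies of `e^{-|x|²/2}` modulated by `e^{±i k·x}`, so `ℱv_{k,m,ε}(ξ)` is a multiple of
`e^{-|ξ+k|²/2} + e^{-|ξ-k|²/2}`. For `|ξ| < r ≤ (1/2 - α)|k|` both `|ξ ± k|` are at least
`(1/2 + α)|k|`, and `(1/2 + α)² - 2α = (1/2 - α)² ≥ 0` turns this into the bound `e^{-α|k|²}`. -/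

section GaussianFourier

variable {V : Type*} [NormedAddCommGroup V] [InnerProductSpace ℝ V] [FiniteDimensional ℝ V]
  [MeasurableSpace V] [BorelSpace V]

theorem integrable_cexp_I_mul_inner_sub_half_norm_sq (η : V) :
    Integrable fun x : V => Complex.exp (Complex.I * (inner ℝ η x : ℝ) - (‖x‖ : ℂ) ^ 2 / 2) := by
  convert GaussianFourier.integrable_cexp_neg_mul_sq_norm_add (V := V) (b := 1 / 2)
    (by norm_num) Complex.I η using 3 with x
  ring

theorem integral_cexp_I_mul_inner_sub_half_norm_sq (η : V) :
    ∫ x : V, Complex.exp (Complex.I * (inner ℝ η x : ℝ) - (‖x‖ : ℂ) ^ 2 / 2)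
      = (((2 * π) ^ ((Module.finrank ℝ V : ℝ) / 2) * Real.exp (-‖η‖ ^ 2 / 2) : ℝ) : ℂ) := by
  have h := GaussianFourier.integral_cexp_neg_mul_sq_norm_add (V := V) (b := 1 / 2)
    (by norm_num) Complex.I η
  convert h using 1
  · congr 1 with x
    congr 1
    ring
  · rw [Complex.ofReal_mul, Complex.ofReal_cpow (by positivity), Complex.ofReal_exp, Complex.I_sq]
    push_cast
    congr 2 <;> ring

end GaussianFourier

theorem cexp_I_mul_mul_vkme {d : ℕ} (k : Ed d) (m : ℕ) (ε : ℝ) (ξ x : Ed d) :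
    Complex.exp (Complex.I * (inner ℝ ξ x : ℝ)) * vkme k m ε x
      = ((ε * (‖k‖ ^ m)⁻¹ / 2 : ℝ) : ℂ) *
        (Complex.exp (Complex.I * (inner ℝ (ξ + k) x : ℝ) - (‖x‖ : ℂ) ^ 2 / 2)
          + Complex.exp (Complex.I * (inner ℝ (ξ - k) x : ℝ) - (‖x‖ : ℂ) ^ 2 / 2)) := by
  simp only [vkme, inner_add_left, inner_sub_left]
  push_cast [Complex.ofReal_exp, Complex.ofReal_cos]
  rw [Complex.cos]
  simp only [sub_eq_add_neg, mul_add, Complex.exp_add, neg_div, mul_neg]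
  ring_nf

theorem FT_vkme {d : ℕ} (k : Ed d) (m : ℕ) (ε : ℝ) (ξ : Ed d) :
    FT (vkme k m ε) ξ = ((ε * (‖k‖ ^ m)⁻¹ / 2 * (2 * π) ^ (-(d : ℝ) / 2)
      * (Real.exp (-‖ξ + k‖ ^ 2 / 2) + Real.exp (-‖ξ - k‖ ^ 2 / 2)) : ℝ) : ℂ) := by
  have hscale : ((2 * π) ^ d)⁻¹ * (2 * π) ^ ((d : ℝ) / 2) = (2 * π) ^ (-(d : ℝ) / 2) := by
    rw [← Real.rpow_natCast, ← Real.rpow_neg (by positivity), ← Real.rpow_add (by positivity)]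
    ring_nf
  simp only [FT, cexp_I_mul_mul_vkme, integral_const_mul]
  rw [integral_add (integrable_cexp_I_mul_inner_sub_half_norm_sq _)
    (integrable_cexp_I_mul_inner_sub_half_norm_sq _),
    integral_cexp_I_mul_inner_sub_half_norm_sq, integral_cexp_I_mul_inner_sub_half_norm_sq,
    finrank_euclideanSpace_fin, ← hscale]
  push_cast
  ring

theorem exp_neg_sq_half_le_exp_neg_mul_sq {α t s : ℝ} (hα : 0 ≤ α) (ht : 0 ≤ t)
    (hs : (1 / 2 + α) * t ≤ s) : Real.exp (-s ^ 2 / 2) ≤ Real.exp (-α * t ^ 2) := by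
  have hsq : ((1 / 2 + α) * t) ^ 2 ≤ s ^ 2 := pow_le_pow_left₀ (by positivity) hs 2
  rw [Real.exp_le_exp]
  nlinarith [sq_nonneg ((1 / 2 - α) * t)]

theorem norm_FT_vkme_le {d : ℕ} {k ξ : Ed d} (m : ℕ) {ε α : ℝ} (hε : 0 ≤ ε) (hα : 0 ≤ α)
    (hk : 1 ≤ ‖k‖) (hξ : ‖ξ‖ ≤ (1 / 2 - α) * ‖k‖) :
    ‖FT (vkme k m ε) ξ‖ ≤ ε * Real.exp (-α * ‖k‖ ^ 2) := by
  have hfar : ∀ s, ‖k‖ - ‖ξ‖ ≤ s → Real.exp (-s ^ 2 / 2) ≤ Real.exp (-α * ‖k‖ ^ 2) :=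
    fun s hs => exp_neg_sq_half_le_exp_neg_mul_sq hα (norm_nonneg k) (by linarith)
  have hplus := hfar ‖ξ + k‖ (by linarith [add_sub_cancel_left ξ k ▸ norm_sub_le (ξ + k) ξ])
  have hminus := hfar ‖ξ - k‖ (by linarith [sub_sub_cancel ξ k ▸ norm_sub_le ξ (ξ - k)])
  have hpow : (‖k‖ ^ m)⁻¹ ≤ 1 := inv_le_one_of_one_le₀ (one_le_pow₀ hk)
  have hscale : (2 * π) ^ (-(d : ℝ) / 2) ≤ 1 :=
    Real.rpow_le_one_of_one_le_of_nonpos (by nlinarith [pi_gt_three])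
      (by linarith [Nat.cast_nonneg (α := ℝ) d])
  rw [FT_vkme, Complex.norm_real, Real.norm_of_nonneg (by positivity)]
  calc ε * (‖k‖ ^ m)⁻¹ / 2 * (2 * π) ^ (-(d : ℝ) / 2)
        * (Real.exp (-‖ξ + k‖ ^ 2 / 2) + Real.exp (-‖ξ - k‖ ^ 2 / 2))
      ≤ ε * 1 / 2 * 1 * (Real.exp (-α * ‖k‖ ^ 2) + Real.exp (-α * ‖k‖ ^ 2)) := by
        gcongr
    _ = ε * Real.exp (-α * ‖k‖ ^ 2) := by ring

theorem supNormOn_le {d : ℕ} {S : Set (Ed d)} {f : Ed d → ℂ} {a : ℝ} (ha : 0 ≤ a)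
    (h : ∀ ξ ∈ S, ‖f ξ‖ ≤ a) : supNormOn S f ≤ a :=
  Real.iSup_le (fun ξ => Real.iSup_le (h ξ) ha) ha

theorem vkme_FT_decay_general {d : ℕ} (r ε : ℝ) (hε : 0 < ε)
    (m : ℕ) (α : ℝ) (hα0 : 0 < α) (hα2 : α < 1 / 2) :
    ∃ C K : ℝ, 0 < C ∧ 0 < K ∧
      ∀ k : Ed d, K ≤ ‖k‖ →
        supNormOn (ball d r) (FT (vkme k m ε)) ≤ C * Real.exp (-α * ‖k‖ ^ 2) := by
  refine ⟨ε, max 1 (r / (1 / 2 - α)), hε, by positivity, fun k hk => ?_⟩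
  have hrk : r ≤ (1 / 2 - α) * ‖k‖ := by
    rw [mul_comm, ← div_le_iff₀ (by linarith)]
    exact (le_max_right _ _).trans hk
  exact supNormOn_le (by positivity) fun ξ (hξ : ‖ξ‖ < r) =>
    norm_FT_vkme_le m hε.le hα0.le ((le_max_left _ _).trans hk) (hξ.le.trans hrk)

/-- Gaussian decay of ℱv_{k,m,ε} on B_r as |k| → ∞. -/
theorem vkme_FT_decay {d : ℕ} (hd : 1 ≤ d) (r ε : ℝ) (hr : 0 < r) (hε : 0 < ε)
    (m : ℕ) (hm : 0 < m) (α : ℝ) (hα0 : 0 < α) (hα2 : α < 1 / 2) :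
    ∃ C K : ℝ, 0 < C ∧ 0 < K ∧
      ∀ k : Ed d, K ≤ ‖k‖ →
        supNormOn (ball d r) (FT (vkme k m ε)) ≤ C * Real.exp (-α * ‖k‖ ^ 2) :=
  vkme_FT_decay_general r ε hε m α hα0 hα2

end
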